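/- arXiv:1103.1885 — 6 statements merged into one kernel-verified Lean document; each statement's English description precedes it below -/
import Mathlib

section
/- Let a, b be natural numbers with a + b < 2^m, and for a natural number x < 2^m define J_x = { c : binary digits of c are pointwise ≤ those of x }. Then a natural number c belongs to J_{a+b} if and only if the number of decompositions c = c₁ + c₂ with c₁ ∈ J_a and c₂ ∈ J_b is odd. -/
/-!
By Lucas' theorem modulo 2, `x.choose y` is odd exactly when `y ⪯ x`. Vandermonde's
identity writes `(a + b).choose c` as the sum of `a.choose c₁ * b.choose c₂` over
`c₁ + c₂ = c`; its parity is that of the number of odd summands, i.e. of decompositions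
with `c₁ ⪯ a` and `c₂ ⪯ b`. The bounds `< 2 ^ m` are automatic, since `y ⪯ x` implies `y ≤ x`.
-/

/-- Digit domination: every binary digit of `y` is at most the corresponding digit of `x`. -/
def DigitLE (y x : ℕ) : Prop := ∀ i, y / 2 ^ i % 2 ≤ x / 2 ^ i % 2

namespace DigitLE

theorem iff_mod_two_and_div_two {y x : ℕ} :
    DigitLE y x ↔ y % 2 ≤ x % 2 ∧ DigitLE (y / 2) (x / 2) := by
  have shift : ∀ n i, n / 2 ^ (i + 1) = n / 2 / 2 ^ i := fun n i => by
    rw [pow_succ', Nat.div_div_eq_div_mul]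
  constructor
  · intro h
    exact ⟨by simpa using h 0, fun i => by simpa only [shift] using h (i + 1)⟩
  · rintro ⟨h0, h⟩ (_ | i)
    · simpa using h0
    · simpa only [shift] using h i

theorem le {y x : ℕ} (h : DigitLE y x) : y ≤ x := by
  induction y using Nat.strong_induction_on generalizing x with
  | _ y ih =>
    rcases Nat.eq_zero_or_pos y with rfl | hy
    · exact Nat.zero_le x
    obtain ⟨h0, hdiv⟩ := iff_mod_two_and_div_two.mp h
    have := ih (y / 2) (Nat.div_lt_self hy one_lt_two) hdiv
    omega

theorem zero_right_iff {y : ℕ} : DigitLE y 0 ↔ y = 0 :=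
  ⟨fun h => Nat.le_zero.mp h.le, by rintro rfl i; simp⟩

end DigitLE

theorem Nat.odd_choose_iff_digitLE (x y : ℕ) : Odd (x.choose y) ↔ DigitLE y x := by
  induction x using Nat.strong_induction_on generalizing y with
  | _ x ih =>
    rcases Nat.eq_zero_or_pos x with rfl | hx
    · cases y <;> simp [DigitLE.zero_right_iff]
    have lucas : x.choose y ≡ (x % 2).choose (y % 2) * (x / 2).choose (y / 2) [MOD 2] :=
      @Choose.choose_modEq_choose_mod_mul_choose_div_nat x y 2 ⟨Nat.prime_two⟩
    have lowest_digit : Odd ((x % 2).choose (y % 2)) ↔ y % 2 ≤ x % 2 := by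
      rcases Nat.mod_two_eq_zero_or_one x with hx | hx <;>
        rcases Nat.mod_two_eq_zero_or_one y with hy | hy <;> simp [hx, hy]
    rw [Nat.odd_iff, lucas, ← Nat.odd_iff, Nat.odd_mul, lowest_digit,
      ih (x / 2) (Nat.div_lt_self hx one_lt_two), ← DigitLE.iff_mod_two_and_div_two]

open scoped Classical in
/-- For `a + b < 2^m` and `J_x = {c < 2^m : c ⪯ x}` (digitwise domination), a natural
number `c` belongs to `J_{a+b}` iff the number of ordered decompositions
`c = c₁ + c₂` with `c₁ ∈ J_a` and `c₂ ∈ J_b` is odd. -/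
theorem mem_J_add_iff_odd_decompositions (m a b c : ℕ) (hab : a + b < 2 ^ m) :
    (c < 2 ^ m ∧ DigitLE c (a + b)) ↔
      Odd ((((Finset.range (c + 1)) ×ˢ (Finset.range (c + 1))).filter
        (fun q => q.1 + q.2 = c ∧ (q.1 < 2 ^ m ∧ DigitLE q.1 a) ∧
          (q.2 < 2 ^ m ∧ DigitLE q.2 b))).card) := by
  have bounded : ∀ {x y : ℕ}, x < 2 ^ m → (y < 2 ^ m ∧ DigitLE y x ↔ DigitLE y x) :=
    fun hx => and_iff_right_of_imp fun h => h.le.trans_lt hx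
  have decompositions : ((Finset.range (c + 1)) ×ˢ (Finset.range (c + 1))).filter
      (fun q => q.1 + q.2 = c ∧ (q.1 < 2 ^ m ∧ DigitLE q.1 a) ∧
        (q.2 < 2 ^ m ∧ DigitLE q.2 b)) =
      (Finset.HasAntidiagonal.antidiagonal c).filter
        (fun q => Odd (a.choose q.1 * b.choose q.2)) := by
    ext ⟨i, j⟩
    simp only [Finset.mem_filter, Finset.mem_product, Finset.mem_range,
      Finset.HasAntidiagonal.mem_antidiagonal, bounded (show a < 2 ^ m by omega),
      bounded (show b < 2 ^ m by omega), Nat.odd_mul,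
      Nat.odd_choose_iff_digitLE]
    constructor
    · exact fun h => ⟨h.2.1, h.2.2⟩
    · rintro ⟨rfl, h⟩
      exact ⟨⟨by omega, by omega⟩, rfl, h⟩
  rw [bounded hab, decompositions, ← Nat.odd_choose_iff_digitLE, Nat.add_choose_eq,
    Finset.odd_sum_iff_odd_card_odd]
end

section
/- Let S be an abelian subgroup of the N-qubit Pauli group not containing −I, with r independent generators. Then the stabilizer subspace V_S = { ψ : Uψ = ψ for all U ∈ S } has dimension 2^{N−r}. -/
/-! The stabilizer subspace is the range of the idempotent `P = ∏ⱼ (1 + Sⱼ)/2` (the `Sⱼ` are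
commuting involutions fixing exactly that subspace), so its dimension is `tr P`. Expanding the
product, `tr P = 2⁻ʳ ∑_f tr (∏ⱼ Sⱼ^{fⱼ})`. Every Pauli operator is a scalar multiple of a monomial
`X^a Z^b`, which is traceless unless `a = b = 0`; by independence no nonempty product of the `Sⱼ` is
a scalar, so only `f = 0` contributes and `tr P = 2⁻ʳ · 2ᴺ`. -/

open Matrix

/-- The Pauli `X` operator on qubit `j` of an `N`-qubit system: in the computational
basis (indexed by `Fin N → ZMod 2`) it flips the `j`-th bit. -/
def pauliX (N : ℕ) (j : Fin N) :
    Matrix (Fin N → ZMod 2) (Fin N → ZMod 2) ℂ :=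
  Matrix.of fun a b => if a = Function.update b j (b j + 1) then 1 else 0

/-- The Pauli `Z` operator on qubit `j` of an `N`-qubit system: diagonal, with
eigenvalue `(-1)^{b_j}` on the basis state `b`. -/
def pauliZ (N : ℕ) (j : Fin N) :
    Matrix (Fin N → ZMod 2) (Fin N → ZMod 2) ℂ :=
  Matrix.of fun a b => if a = b then (-1 : ℂ) ^ (b j).val else 0

/-- The `N`-qubit Pauli group: generated (as a multiplicative closure) by `iI` and the
single-qubit operators `X_j`, `Z_j`.  (Every element has an inverse in the closure,
so this submonoid is in fact a group of units.) -/
def pauliGroup (N : ℕ) :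
    Submonoid (Matrix (Fin N → ZMod 2) (Fin N → ZMod 2) ℂ) :=
  Submonoid.closure ({Complex.I • 1} ∪ Set.range (pauliX N) ∪ Set.range (pauliZ N))

lemma List.prod_map_smul {ι R M : Type*} [CommMonoid R] [Monoid M] [MulAction R M]
    [IsScalarTower R M M] [SMulCommClass R M M] (l : List ι) (c : ι → R) (x : ι → M) :
    (l.map fun i => c i • x i).prod = (l.map c).prod • (l.map x).prod := by
  induction l with
  | nil => simp
  | cons i l ih => simp only [List.map_cons, List.prod_cons, ih, smul_mul_smul]

lemma List.mul_prod_eq_prod_of_mem {M : Type*} [Monoid M] {x a : M} {l : List M} (ha : a ∈ l)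
    (hxa : x * a = a) (hcomm : ∀ b ∈ l, Commute x b) : x * l.prod = l.prod := by
  induction l with
  | nil => simp at ha
  | cons b l ih =>
    rw [List.prod_cons]
    rcases List.mem_cons.mp ha with rfl | ha
    · rw [← mul_assoc, hxa]
    · rw [← mul_assoc, (hcomm b List.mem_cons_self).eq, mul_assoc,
        ih ha fun c hc => hcomm c (List.mem_cons_of_mem b hc)]

lemma IsIdempotentElem.list_prod {M : Type*} [Monoid M] {l : List M}
    (hcomm : ∀ a ∈ l, ∀ b ∈ l, Commute a b) (hidem : ∀ a ∈ l, IsIdempotentElem a) :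
    IsIdempotentElem l.prod := by
  induction l with
  | nil => exact IsIdempotentElem.one
  | cons a l ih =>
    rw [List.prod_cons]
    simp only [List.mem_cons, forall_eq_or_imp] at hcomm hidem
    exact IsIdempotentElem.mul_of_commute (Commute.list_prod_right _ _ hcomm.1.2) hidem.1
      (ih (fun b hb => (hcomm.2 b hb).2) hidem.2)

lemma List.prod_map_finRange_add {R : Type*} [Semiring R] {r : ℕ} (x y : Fin r → R) :
    ((List.finRange r).map fun j => x j + y j).prod =
      ∑ f : Fin r → Bool, ((List.finRange r).map fun j => if f j then x j else y j).prod := by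
  induction r with
  | zero => simp
  | succ r ih =>
    rw [← (Fin.consEquiv fun _ => Bool).sum_comp, Fintype.sum_prod_type]
    simp only [List.finRange_succ, List.map_cons, List.map_map, List.prod_cons, Function.comp_def,
      Fin.consEquiv_apply, Fin.cons_zero, Fin.cons_succ,
      Fintype.sum_bool, ← Finset.mul_sum, add_mul, if_true, Bool.false_eq_true, if_false]
    rw [← ih (fun j => x j.succ) (fun j => y j.succ)]

section StabilizerProjector

variable (K : Type*) {A : Type*} [Field K] [Ring A] [Algebra K A] {r : ℕ}

def stabilizerProjector (S : Fin r → A) : A :=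
  ((List.finRange r).map fun j => (2 : K)⁻¹ • (1 + S j)).prod

def maskProd (S : Fin r → A) (f : Fin r → Bool) : A :=
  ((List.finRange r).map fun j => if f j then S j else 1).prod

variable {K} {S : Fin r → A}

lemma stabilizerProjector_eq_sum (S : Fin r → A) :
    stabilizerProjector K S = (2 : K)⁻¹ ^ r • ∑ f, maskProd S f := by
  rw [stabilizerProjector, List.prod_map_smul, List.map_const', List.prod_replicate,
    List.length_finRange]
  simp only [add_comm (1 : A), List.prod_map_finRange_add, maskProd]

lemma Commute.one_add_one_add {a b : A} (h : Commute a b) : Commute (1 + a) (1 + b) :=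
  (Commute.one_left _).add_left ((Commute.one_right a).add_right h)

lemma isIdempotentElem_inv_two_smul_one_add {s : A} (hs : s * s = 1) :
    IsIdempotentElem ((2 : K)⁻¹ • (1 + s)) := by
  have hsq : (1 + s) * (1 + s) = (2 : K) • (1 + s) := by
    simp only [two_smul, mul_add, add_mul, hs, one_mul, mul_one]; abel
  rw [IsIdempotentElem, smul_mul_smul, hsq, smul_smul, mul_right_comm]
  congr 1
  simpa only [inv_inv] using mul_inv_mul_cancel (2⁻¹ : K)

lemma isIdempotentElem_stabilizerProjector (hcomm : ∀ i j, Commute (S i) (S j))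
    (hsq : ∀ j, S j * S j = 1) : IsIdempotentElem (stabilizerProjector K S) := by
  refine IsIdempotentElem.list_prod ?_ ?_ <;> simp only [List.mem_map, List.mem_finRange,
    true_and, forall_exists_index, forall_apply_eq_imp_iff]
  · exact fun i j => (((hcomm i j).one_add_one_add).smul_left _).smul_right _
  · exact fun j => isIdempotentElem_inv_two_smul_one_add (hsq j)

lemma mul_stabilizerProjector (hcomm : ∀ i j, Commute (S i) (S j)) (hsq : ∀ j, S j * S j = 1)
    (j : Fin r) : S j * stabilizerProjector K S = stabilizerProjector K S := by
  refine List.mul_prod_eq_prod_of_mem (List.mem_map_of_mem (List.mem_finRange j)) ?_ ?_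
  · rw [mul_smul_comm, mul_add, mul_one, hsq, add_comm]
  · simp only [List.mem_map, List.mem_finRange, true_and, forall_exists_index,
      forall_apply_eq_imp_iff]
    exact fun k => (((Commute.one_right _).add_right (hcomm j k))).smul_right _

end StabilizerProjector

section FixedSpace

variable {K n : Type*} [Field K] [Fintype n] [DecidableEq n]

lemma finrank_range_mulVecLin_of_isIdempotentElem {P : Matrix n n K} (hP : IsIdempotentElem P) :
    (Module.finrank K (LinearMap.range P.mulVecLin) : K) = P.trace := by
  have hP' : IsIdempotentElem (Matrix.toLin' P) := hP.map Matrix.toLinAlgEquiv'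
  rw [← Matrix.toLin'_apply', ← Matrix.trace_toLin'_eq,
    (LinearMap.IsIdempotentElem.isProj_range _ hP').trace]

lemma iInf_ker_sub_id_eq_range_mulVecLin {s : Set (Matrix n n K)} {P : Matrix n n K}
    (habsorb : ∀ U ∈ s, U * P = P) (hfix : ∀ ψ, (∀ U ∈ s, U *ᵥ ψ = ψ) → P *ᵥ ψ = ψ) :
    ⨅ U ∈ Submonoid.closure s, LinearMap.ker (U.mulVecLin - LinearMap.id) =
      LinearMap.range P.mulVecLin := by
  simp only [SetLike.ext_iff, Submodule.mem_iInf, LinearMap.mem_ker, LinearMap.sub_apply,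
    Matrix.mulVecLin_apply, LinearMap.id_apply, sub_eq_zero, LinearMap.mem_range]
  refine fun ψ => ⟨fun hψ => ⟨ψ, hfix ψ fun U hU => hψ U (Submonoid.subset_closure hU)⟩, ?_⟩
  rintro ⟨φ, rfl⟩ U hU
  induction hU using Submonoid.closure_induction with
  | mem U hU => rw [Matrix.mulVec_mulVec, habsorb U hU]
  | one => rw [Matrix.one_mulVec]
  | mul U V _ _ hU hV => rw [← Matrix.mulVec_mulVec, hV, hU]

lemma iInf_ker_sub_id_eq_range_stabilizerProjector [NeZero (2 : K)] {r : ℕ}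
    {S : Fin r → Matrix n n K} (hcomm : ∀ i j, Commute (S i) (S j)) (hsq : ∀ j, S j * S j = 1) :
    ⨅ U ∈ Submonoid.closure (Set.range S), LinearMap.ker (U.mulVecLin - LinearMap.id) =
      LinearMap.range (stabilizerProjector K S).mulVecLin := by
  refine iInf_ker_sub_id_eq_range_mulVecLin (by simpa using mul_stabilizerProjector hcomm hsq)
    fun ψ hψ => ?_
  suffices ∀ l : List (Matrix n n K), (∀ U ∈ l, U *ᵥ ψ = ψ) → l.prod *ᵥ ψ = ψ from
    this _ <| by
      simp only [List.mem_map, List.mem_finRange, true_and, forall_exists_index,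
        forall_apply_eq_imp_iff]
      intro j
      rw [Matrix.smul_mulVec, Matrix.add_mulVec, Matrix.one_mulVec, hψ _ ⟨j, rfl⟩, ← two_smul K,
        smul_smul, inv_mul_cancel₀ two_ne_zero, one_smul]
  intro l hl
  induction l with
  | nil => exact Matrix.one_mulVec ψ
  | cons U l ih =>
    rw [List.prod_cons, ← Matrix.mulVec_mulVec, ih fun V hV => hl V (List.mem_cons_of_mem U hV),
      hl U List.mem_cons_self]

end FixedSpace

namespace Pauli

variable {N : ℕ}

noncomputable def phase (b w : Fin N → ZMod 2) : ℂ := ∏ j, (-1 : ℂ) ^ (b j * w j).val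

/-- The Pauli monomial `X^a Z^b`. -/
noncomputable def monomial (a b : Fin N → ZMod 2) : Matrix (Fin N → ZMod 2) (Fin N → ZMod 2) ℂ :=
  Matrix.of fun v w => if v = w + a then phase b w else 0

lemma neg_one_pow_val_add (u v : ZMod 2) :
    (-1 : ℂ) ^ (u + v).val = (-1) ^ u.val * (-1) ^ v.val := by
  rw [ZMod.val_add, ← neg_one_pow_eq_pow_mod_two, pow_add]

lemma phase_add_left (b b' w : Fin N → ZMod 2) :
    phase (b + b') w = phase b w * phase b' w := by
  simp only [phase, ← Finset.prod_mul_distrib, Pi.add_apply, add_mul, neg_one_pow_val_add]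

lemma phase_add_right (b w w' : Fin N → ZMod 2) :
    phase b (w + w') = phase b w * phase b w' := by
  simp only [phase, ← Finset.prod_mul_distrib, Pi.add_apply, mul_add, neg_one_pow_val_add]

lemma phase_single (j : Fin N) (w : Fin N → ZMod 2) :
    phase (Pi.single j 1) w = (-1) ^ (w j).val := by
  rw [phase, Finset.prod_eq_single j (fun i _ hi => by simp [Pi.single_eq_of_ne hi]) (by simp)]
  simp

lemma sum_neg_one_pow_val : ∑ x : ZMod 2, (-1 : ℂ) ^ x.val = 0 :=
  (Fin.sum_univ_two fun x : Fin 2 => (-1 : ℂ) ^ (x : ℕ)).trans (by norm_num)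

lemma sum_phase_eq_zero {b : Fin N → ZMod 2} (hb : b ≠ 0) : ∑ w, phase b w = 0 := by
  classical
  obtain ⟨j, hj⟩ := Function.ne_iff.mp hb
  have hbj : b j = 1 := (by decide : ∀ x : ZMod 2, x ≠ 0 → x = 1) _ hj
  simp only [phase]
  rw [← Fintype.prod_sum fun i x => (-1 : ℂ) ^ (b i * x).val]
  refine Finset.prod_eq_zero (Finset.mem_univ j) ?_
  simpa only [hbj, one_mul] using sum_neg_one_pow_val

lemma monomial_zero_zero : monomial (0 : Fin N → ZMod 2) 0 = 1 := by
  ext v w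
  simp [monomial, phase, Matrix.one_apply]

lemma monomial_mul (a b a' b' : Fin N → ZMod 2) :
    monomial a b * monomial a' b' = phase b a' • monomial (a + a') (b + b') := by
  ext v w
  rw [Matrix.mul_apply, Finset.sum_eq_single (w + a') (fun u _ hu => by simp [monomial, hu])
    (by simp)]
  simp only [monomial, Matrix.of_apply, Matrix.smul_apply, smul_eq_mul, if_true, add_assoc,
    add_comm a' a]
  split_ifs
  · rw [phase_add_right, phase_add_left]; ring
  · simp

lemma trace_monomial {a b : Fin N → ZMod 2} (h : a ≠ 0 ∨ b ≠ 0) :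
    (monomial a b).trace = 0 := by
  by_cases ha : a = 0
  · subst ha
    simpa [Matrix.trace, monomial] using sum_phase_eq_zero (h.resolve_left (not_not.mpr rfl))
  · refine Finset.sum_eq_zero fun v _ => ?_
    simp [monomial, ha]

lemma pauliX_eq_monomial (j : Fin N) : pauliX N j = monomial (Pi.single j 1) 0 := by
  ext v w
  have : Function.update w j (w j + 1) = w + Pi.single j 1 := by
    ext i
    rcases eq_or_ne i j with rfl | hi <;> simp [*]
  simp [pauliX, monomial, phase, this]

lemma pauliZ_eq_monomial (j : Fin N) : pauliZ N j = monomial 0 (Pi.single j 1) := by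
  ext v w
  simp [pauliZ, monomial, phase_single]

lemma exists_eq_smul_monomial {U : Matrix (Fin N → ZMod 2) (Fin N → ZMod 2) ℂ}
    (hU : U ∈ pauliGroup N) : ∃ (α : ℂ) (a b : Fin N → ZMod 2), U = α • monomial a b := by
  induction hU using Submonoid.closure_induction with
  | mem V hV =>
    rcases hV with (rfl | ⟨j, rfl⟩) | ⟨j, rfl⟩
    · exact ⟨Complex.I, 0, 0, by rw [monomial_zero_zero]⟩
    · exact ⟨1, Pi.single j 1, 0, by rw [pauliX_eq_monomial, one_smul]⟩
    · exact ⟨1, 0, Pi.single j 1, by rw [pauliZ_eq_monomial, one_smul]⟩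
  | one => exact ⟨1, 0, 0, by rw [monomial_zero_zero, one_smul]⟩
  | mul U V _ _ hU hV =>
    obtain ⟨α, a, b, rfl⟩ := hU
    obtain ⟨β, a', b', rfl⟩ := hV
    exact ⟨α * β * phase b a', a + a', b + b', by
      rw [smul_mul_smul, monomial_mul, smul_smul]⟩

lemma trace_eq_zero_of_mem_pauliGroup {U : Matrix (Fin N → ZMod 2) (Fin N → ZMod 2) ℂ}
    (hU : U ∈ pauliGroup N) (hscalar : ∀ α : ℂ, U ≠ α • 1) : U.trace = 0 := by
  obtain ⟨α, a, b, rfl⟩ := exists_eq_smul_monomial hU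
  have hab : a ≠ 0 ∨ b ≠ 0 := by
    by_contra! h
    exact hscalar α (by rw [h.1, h.2, monomial_zero_zero])
  rw [Matrix.trace_smul, trace_monomial hab, smul_zero]

variable {r : ℕ} {S : Fin r → Matrix (Fin N → ZMod 2) (Fin N → ZMod 2) ℂ}

lemma maskProd_mem_pauliGroup (hmem : ∀ j, S j ∈ pauliGroup N) (f : Fin r → Bool) :
    maskProd S f ∈ pauliGroup N := by
  refine Submonoid.list_prod_mem _ ?_
  simp only [List.mem_map, List.mem_finRange, true_and, forall_exists_index,
    forall_apply_eq_imp_iff]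
  intro j
  split_ifs
  exacts [hmem j, Submonoid.one_mem _]

lemma trace_stabilizerProjector (hr : r ≤ N) (hmem : ∀ j, S j ∈ pauliGroup N)
    (hindep : ∀ f : Fin r → Bool, (∃ α : ℂ, maskProd S f = α • 1) → f = fun _ => false) :
    (stabilizerProjector ℂ S).trace = 2 ^ (N - r) := by
  have htrace_one : (maskProd S fun _ => false).trace = 2 ^ N := by
    simp [maskProd, Matrix.trace_one]
  rw [stabilizerProjector_eq_sum, Matrix.trace_smul, Matrix.trace_sum,
    Finset.sum_eq_single (fun _ => false) (fun f _ hf => trace_eq_zero_of_mem_pauliGroup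
      (maskProd_mem_pauliGroup hmem f) fun α hα => hf (hindep f ⟨α, hα⟩)) (by simp),
    htrace_one, pow_sub₀ _ two_ne_zero hr, smul_eq_mul, inv_pow, mul_comm]

end Pauli

theorem stabilizer_subspace_dim_general (N r : ℕ) (hr : r ≤ N)
    (S : Fin r → Matrix (Fin N → ZMod 2) (Fin N → ZMod 2) ℂ)
    (hmem : ∀ j, S j ∈ pauliGroup N)
    (hcomm : ∀ j l, S j * S l = S l * S j)
    (hsq : ∀ j, S j * S j = 1)
    (hindep : ∀ f : Fin r → Bool,
      (∃ α : ℂ, ((List.finRange r).map (fun j => if f j then S j else 1)).prod = α • 1) →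
      f = fun _ => false) :
    Module.finrank ℂ
      ↥(⨅ U ∈ Submonoid.closure (Set.range S),
        LinearMap.ker (Matrix.mulVecLin U - LinearMap.id)) = 2 ^ (N - r) := by
  rw [iInf_ker_sub_id_eq_range_stabilizerProjector hcomm hsq]
  exact_mod_cast (finrank_range_mulVecLin_of_isIdempotentElem
    (isIdempotentElem_stabilizerProjector hcomm hsq)).trans
    (Pauli.trace_stabilizerProjector hr hmem hindep)

/-- Let `S_1, …, S_r` be commuting Pauli operators squaring to the identity, generating
an abelian subgroup `𝒮` of the `N`-qubit Pauli group with `-I ∉ 𝒮`, and independent in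
the sense that no nontrivial product of them equals the identity up to phase.  Then the
stabilizer subspace `V_S = {ψ : Uψ = ψ for all U ∈ 𝒮}` has dimension `2^{N-r}`. -/
theorem stabilizer_subspace_dim (N r : ℕ) (hr : r ≤ N)
    (S : Fin r → Matrix (Fin N → ZMod 2) (Fin N → ZMod 2) ℂ)
    (hmem : ∀ j, S j ∈ pauliGroup N)
    (hcomm : ∀ j l, S j * S l = S l * S j)
    (hsq : ∀ j, S j * S j = 1)
    (hneg : (-1 : Matrix (Fin N → ZMod 2) (Fin N → ZMod 2) ℂ) ∉
      Submonoid.closure (Set.range S))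
    (hindep : ∀ f : Fin r → Bool,
      (∃ α : ℂ, ((List.finRange r).map (fun j => if f j then S j else 1)).prod = α • 1) →
      f = fun _ => false) :
    Module.finrank ℂ
      ↥(⨅ U ∈ Submonoid.closure (Set.range S),
        LinearMap.ker (Matrix.mulVecLin U - LinearMap.id)) = 2 ^ (N - r) :=
  stabilizer_subspace_dim_general N r hr S hmem hcomm hsq hindep
end

section
/- Consider a family of stabilizer codes with continuously deformable logical operators on a D-dimensional torus, with k logical qubits, such that for each m the complement of the m-dimensional concatenated unit region R_m supports exactly as many independent logical operators as R_{D−m−1} (i.e. g_{R̄_m} = g_{R_{D−m−1}}). Then the number g_m of m-dimensional logical operators equals g_{D−m} for all m = 0,...,D, where g_m := g_{R_m} − g_{R_{m−1}} and g_{R_{−1}} := 0. -/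
/-!
Prepend `g_{R_{-1}} = 0` to the sequence `g_{R_m}` to get `f j = g_{R_{j-1}}`. The duality
hypotheses and `g_{R_D} = 2k` then say exactly that `f j + f (D + 1 - j) = 2k` for all
`j ≤ D + 1`, and any sequence whose reflection adds up to a constant has palindromic
increments; `g_m` is the increment `f (m + 1) - f m`.
-/

def prependZero {G : Type*} [Zero G] (g : ℕ → G) : ℕ → G
  | 0 => 0
  | j + 1 => g j

theorem sub_eq_sub_reflect_of_add_reflect_eq {G : Type*} [AddCommGroup G] {f : ℕ → G}
    {N : ℕ} {c : G} (h : ∀ j ≤ N, f j + f (N - j) = c) {m : ℕ} (hm : m < N) :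
    f (m + 1) - f m = f (N - m) - f (N - m - 1) := by
  rw [sub_eq_sub_iff_add_eq_add, add_comm (f (N - m)), h m hm.le, Nat.sub_sub, h (m + 1) hm]

theorem prependZero_add_reflect_eq {G : Type*} [AddCommGroup G] {D : ℕ} {c : G} {g : ℕ → G}
    (htop : g D = c)
    (hdual : ∀ m < D, g m + g (D - m - 1) = c) :
    ∀ j ≤ D + 1, prependZero g j + prependZero g (D + 1 - j) = c := by
  rintro (_ | i) hi
  · simpa [prependZero] using htop
  · rcases (Nat.lt_succ_iff.mp hi).lt_or_eq with hlt | rfl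
    · obtain ⟨l, hl⟩ : ∃ l, D + 1 - (i + 1) = l + 1 := ⟨D - i - 1, by omega⟩
      rw [hl]
      simpa [prependZero, show l = D - i - 1 by omega] using hdual i hlt
    · simpa [prependZero] using htop

/-- Dimensional duality count.  `gR m` is the number of independent logical operators
supported on the `m`-dimensional concatenated unit region `R_m` of a `D`-dimensional
code with `k` logical qubits; the bipartition identity together with the topological
shrinkage `R̄_m ≃ R_{D-m-1}` gives `gR m + gR (D-m-1) = 2k` for `m < D`, and
`gR D = 2k`.  Then the number `gm m = gR m - gR (m-1)` (with `gR (-1) = 0`, i.e.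
`gm 0 = gR 0`) of `m`-dimensional logical operators satisfies `gm m = gm (D - m)`
for all `m = 0, …, D`. -/
theorem dimensional_duality_count (D k : ℕ) (gR : ℕ → ℤ)
    (htop : gR D = 2 * k)
    (hdual : ∀ m < D, gR m + gR (D - m - 1) = 2 * k)
    (gm : ℕ → ℤ)
    (hgm0 : gm 0 = gR 0)
    (hgm : ∀ m, 1 ≤ m → gm m = gR m - gR (m - 1)) :
    ∀ m ≤ D, gm m = gm (D - m) := by
  have hinc : ∀ m, gm m = prependZero gR (m + 1) - prependZero gR m := by
    rintro (_ | m)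
    · simp [prependZero, hgm0]
    · simp [prependZero, hgm (m + 1) m.succ_pos]
  intro m hm
  have hrefl := prependZero_add_reflect_eq htop hdual
  rw [hinc, hinc, sub_eq_sub_reflect_of_add_reflect_eq hrefl (Nat.lt_succ_of_le hm)]
  congr 2 <;> omega
end

section
/- Under the assumptions of the dimensional duality count (g_m = g_{D−m} for all m) together with the property that any m-dimensional and m'-dimensional logical operators commute whenever m + m' < D, there exists a canonical basis of 2k logical operators {ℓ_1,...,ℓ_k; r_1,...,r_k} such that each anti-commuting pair (ℓ_p, r_p) consists of an m_p-dimensional and a (D−m_p)-dimensional logical operator, ℓ_p anti-commutes with r_p, and all other pairs commute. -/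
/-!
The hypotheses make the filtration self-dual: the commutation condition gives
`W (D - m) ≤ (W (m + 1))ᗮ`, and the count `g_m = g_{D-m}` telescopes to
`dim W (m + 1) + dim W (D - m) = dim V`, so `W (D - m) = (W (m + 1))ᗮ`.

The pairs are then built one at a time, as in symplectic Gram–Schmidt. Take a nonzero `ℓ`
orthogonal to the pairs built so far and let `m` be its exact level. As
`ℓ ∉ W m = (W (D - m + 1))ᗮ`, some `r ∈ W (D - m + 1)` has `ω ℓ r = 1`. Projecting `r` away from the earlier pairs keeps it in
`W (D - m + 1)`, by the commutation condition, and it cannot lie in `W (D - m) = (W (m + 1))ᗮ`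
because it still pairs with `ℓ`. After `k` steps the `2k` vectors are independent by their
pairings, hence a basis.
-/

open Module

section SymplecticFamily

variable {R M ι : Type*} [CommRing R] [AddCommGroup M] [Module R M]
variable {ω : LinearMap.BilinForm R M} {ℓ r : ι → M}

/-- For a symplectic family `(ℓ, r)`, this is the projection onto the `ω`-orthogonal of the span
of the family, along that span. -/
def symplecticProj [Fintype ι] (ω : LinearMap.BilinForm R M) (ℓ r : ι → M) (x : M) : M :=
  x - ∑ p, ω x (r p) • ℓ p + ∑ p, ω x (ℓ p) • r p

theorem apply_symplecticProj [Fintype ι] (y x : M) :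
    ω y (symplecticProj ω ℓ r x) =
      ω y x - ∑ p, ω x (r p) * ω y (ℓ p) + ∑ p, ω x (ℓ p) * ω y (r p) := by
  simp [symplecticProj, map_sum]

theorem apply_symplecticProj_of_forall_eq_zero [Fintype ι] {y : M} (hℓ : ∀ p, ω y (ℓ p) = 0)
    (hr : ∀ p, ω y (r p) = 0) (x : M) : ω y (symplecticProj ω ℓ r x) = ω y x := by
  simp [apply_symplecticProj, hℓ, hr]

variable [DecidableEq ι]

structure IsSymplecticFamily (ω : LinearMap.BilinForm R M) (ℓ r : ι → M) : Prop where
  left_right : ∀ p q, ω (ℓ p) (r q) = if p = q then 1 else 0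
  left_left : ∀ p q, ω (ℓ p) (ℓ q) = 0
  right_right : ∀ p q, ω (r p) (r q) = 0

namespace IsSymplecticFamily

theorem linearIndependent [Fintype ι] (h : IsSymplecticFamily ω ℓ r) :
    LinearIndependent R (Sum.elim ℓ r) := by
  rw [Fintype.linearIndependent_iff]
  intro g hg
  have coeff_left (q : ι) : g (.inl q) = 0 := by
    simpa [Fintype.sum_sum_type, h.left_right, h.right_right] using
      congrArg (fun v => ω v (r q)) hg
  have coeff_right (q : ι) : g (.inr q) = 0 := by
    simpa [Fintype.sum_sum_type, h.left_right, h.left_left] using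
      congrArg (fun v => ω (ℓ q) v) hg
  rintro (q | q)
  exacts [coeff_left q, coeff_right q]

theorem snoc {j : ℕ} {ℓ r : Fin j → M} {ℓ' r' : M} (h : IsSymplecticFamily ω ℓ r)
    (hω : ω.IsAlt) (hℓℓ' : ∀ p, ω (ℓ p) ℓ' = 0) (hrℓ' : ∀ p, ω (r p) ℓ' = 0)
    (hℓr' : ∀ p, ω (ℓ p) r' = 0) (hrr' : ∀ p, ω (r p) r' = 0) (hℓ'r' : ω ℓ' r' = 1) :
    IsSymplecticFamily ω (Fin.snoc ℓ ℓ' : Fin (j + 1) → M) (Fin.snoc r r') := by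
  have flip {x y : M} (hxy : ω x y = 0) : ω y x = 0 := hω.eq_iff.mp hxy
  refine ⟨fun p q => ?_, fun p q => ?_, fun p q => ?_⟩ <;>
    induction p using Fin.lastCases <;> induction q using Fin.lastCases <;>
    simp [h.left_right, h.left_left, h.right_right, hω.self_eq_zero, hℓ'r', hℓℓ', hℓr', hrr',
      flip (hℓℓ' _), flip (hrℓ' _), flip (hrr' _), Fin.castSucc_ne_last,
      (Fin.castSucc_ne_last _).symm]

theorem left_symplecticProj [Fintype ι] (h : IsSymplecticFamily ω ℓ r) (hω : ω.IsAlt)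
    (q : ι) (x : M) : ω (ℓ q) (symplecticProj ω ℓ r x) = 0 := by
  simp [apply_symplecticProj, h.left_left, h.left_right, ← LinearMap.IsAlt.neg hω x (ℓ q)]

theorem right_symplecticProj [Fintype ι] (h : IsSymplecticFamily ω ℓ r) (hω : ω.IsAlt)
    (q : ι) (x : M) : ω (r q) (symplecticProj ω ℓ r x) = 0 := by
  simp [apply_symplecticProj, h.right_right, h.left_right,
    ← LinearMap.IsAlt.neg hω (ℓ _) (r q), ← LinearMap.IsAlt.neg hω x (r q)]

end IsSymplecticFamily

end SymplecticFamily

section Filtration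

variable {K V ι : Type*} [Field K] [AddCommGroup V] [Module K V]

theorem LinearMap.BilinForm.exists_ne_zero_forall_apply_eq_zero [FiniteDimensional K V]
    [Fintype ι] (ω : LinearMap.BilinForm K V) (v : ι → V) (hcard : Fintype.card ι < finrank K V) :
    ∃ u ≠ 0, ∀ i, ω (v i) u = 0 := by
  obtain ⟨u, hu, hu0⟩ := Submodule.exists_mem_ne_zero_of_ne_bot <|
    LinearMap.ker_ne_bot_of_finrank_lt (f := LinearMap.pi fun i => ω (v i))
      (by rwa [finrank_fintype_fun_eq_card])
  exact ⟨u, hu0, fun i => congrFun (LinearMap.mem_ker.mp hu) i⟩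

/-- `v` is an `m`-dimensional logical operator, in the paper's terms. -/
def HasLevel (W : ℕ → Submodule K V) (m : ℕ) (v : V) : Prop :=
  v ∈ W (m + 1) ∧ v ∉ W m

structure IsDualFiltration (ω : LinearMap.BilinForm K V) (D : ℕ) (W : ℕ → Submodule K V) :
    Prop where
  mono : Monotone W
  bot : W 0 = ⊥
  top : W (D + 1) = ⊤
  finrank_dual : ∀ m ≤ D, finrank K (W (m + 1)) + finrank K (W (D - m)) =
    finrank K (W (D - m + 1)) + finrank K (W m)
  apply_eq_zero : ∀ m m', m + m' < D → ∀ u ∈ W (m + 1), ∀ v ∈ W (m' + 1), ω u v = 0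

variable {ω : LinearMap.BilinForm K V} {D : ℕ} {W : ℕ → Submodule K V}

theorem finrank_succ_add_finrank_sub_eq (hbot : W 0 = ⊥) (htop : W (D + 1) = ⊤)
    (hdual : ∀ m ≤ D, finrank K (W (m + 1)) + finrank K (W (D - m)) =
      finrank K (W (D - m + 1)) + finrank K (W m))
    {m : ℕ} (hm : m ≤ D) :
    finrank K (W (m + 1)) + finrank K (W (D - m)) = finrank K V := by
  have shift (n : ℕ) (hn : n + 1 ≤ D) :
      finrank K (W (n + 1 + 1)) + finrank K (W (D - (n + 1))) =
        finrank K (W (n + 1)) + finrank K (W (D - n)) := by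
    rw [hdual (n + 1) hn, show D - (n + 1) + 1 = D - n by omega, add_comm]
  have const (n : ℕ) (hn : n ≤ D) :
      finrank K (W (n + 1)) + finrank K (W (D - n)) = finrank K (W 1) + finrank K (W D) := by
    induction n with
    | zero => rfl
    | succ n ih => rw [shift n hn, ih (by omega)]
  rw [const m hm, ← const D le_rfl, Nat.sub_self, hbot, htop, finrank_bot, finrank_top, add_zero]

namespace IsDualFiltration

theorem le_add_of_apply_ne_zero (hW : IsDualFiltration ω D W) {u v : V} {a b : ℕ}
    (hu : u ∈ W (a + 1)) (hv : v ∈ W (b + 1)) (huv : ω u v ≠ 0) : D ≤ a + b :=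
  not_lt.mp fun h => huv (hW.apply_eq_zero a b h u hu v hv)

theorem orthogonal_eq [FiniteDimensional K V] (hW : IsDualFiltration ω D W)
    (hnd : ω.Nondegenerate) {m : ℕ} (hm : m ≤ D) :
    ω.orthogonal (W (m + 1)) = W (D - m) := by
  symm
  refine Submodule.eq_of_le_of_finrank_eq (fun v hv u hu => ?_) ?_
  · obtain h0 | hpos := Nat.eq_zero_or_pos (D - m)
    · rw [h0, hW.bot, Submodule.mem_bot] at hv
      rw [hv, map_zero]
    · exact hW.apply_eq_zero m (D - m - 1) (by omega) u hu v (by rwa [Nat.sub_add_cancel hpos])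
  · have := finrank_succ_add_finrank_sub_eq hW.bot hW.top hW.finrank_dual hm
    rw [LinearMap.BilinForm.finrank_orthogonal hnd]
    omega

theorem exists_hasLevel (hW : IsDualFiltration ω D W) {v : V} (hv : v ≠ 0) :
    ∃ m ≤ D, HasLevel W m v := by
  have hv0 : v ∉ W 0 := by rwa [hW.bot, Submodule.mem_bot]
  obtain ⟨m, hm, hm1⟩ := Nat.exists_not_and_succ_of_not_zero_of_exists (p := (v ∈ W ·)) hv0
    ⟨D + 1, by simp [hW.top]⟩
  refine ⟨m, ?_, hm1, hm⟩
  by_contra! hlt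
  exact hm (hW.mono hlt (by simp [hW.top]))

theorem exists_mem_apply_eq_one [FiniteDimensional K V] (hW : IsDualFiltration ω D W)
    (hω : ω.IsAlt) (hnd : ω.Nondegenerate) {m : ℕ} (hm : m ≤ D) {v : V} (hv : v ∉ W m) :
    ∃ w ∈ W (D - m + 1), ω v w = 1 := by
  rw [← Nat.sub_sub_self hm, ← hW.orthogonal_eq hnd (Nat.sub_le D m),
    LinearMap.BilinForm.mem_orthogonal_iff] at hv
  push Not at hv
  obtain ⟨u, hu, hvu⟩ := hv
  rw [Ne, ← hω.eq_iff] at hvu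
  exact ⟨(ω v u)⁻¹ • u, Submodule.smul_mem _ _ hu, by simp [hvu]⟩

end IsDualFiltration

variable [DecidableEq ι]

structure IsGradedSymplecticFamily (ω : LinearMap.BilinForm K V) (D : ℕ) (W : ℕ → Submodule K V)
    (ℓ r : ι → V) (d : ι → ℕ) : Prop extends IsSymplecticFamily ω ℓ r where
  level_le : ∀ p, d p ≤ D
  hasLevel_left : ∀ p, HasLevel W (d p) (ℓ p)
  hasLevel_right : ∀ p, HasLevel W (D - d p) (r p)

namespace IsGradedSymplecticFamily

variable {ℓ r : ι → V} {d : ι → ℕ}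

theorem symplecticProj_mem [Fintype ι] (h : IsGradedSymplecticFamily ω D W ℓ r d)
    (hW : IsDualFiltration ω D W) {a : ℕ} {x : V} (hx : x ∈ W (a + 1)) :
    symplecticProj ω ℓ r x ∈ W (a + 1) := by
  have smul_mem {c : K} {y : V} (hy : c ≠ 0 → y ∈ W (a + 1)) : c • y ∈ W (a + 1) := by
    by_cases hc : c = 0
    · simp [hc]
    · exact Submodule.smul_mem _ _ (hy hc)
  -- `ω x (r p) ≠ 0` forces `d p ≤ a`, and `ω x (ℓ p) ≠ 0` forces `D - d p ≤ a`.
  refine add_mem (sub_mem hx (sum_mem fun p _ => smul_mem fun hc => ?_))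
    (sum_mem fun p _ => smul_mem fun hc => ?_)
  · have := hW.le_add_of_apply_ne_zero hx (h.hasLevel_right p).1 hc
    exact hW.mono (by have := h.level_le p; omega) (h.hasLevel_left p).1
  · have := hW.le_add_of_apply_ne_zero hx (h.hasLevel_left p).1 hc
    exact hW.mono (by omega) (h.hasLevel_right p).1

theorem snoc {j : ℕ} {ℓ r : Fin j → V} {d : Fin j → ℕ} {ℓ' r' : V} {m : ℕ}
    (h : IsGradedSymplecticFamily ω D W ℓ r d) (hω : ω.IsAlt)
    (hℓℓ' : ∀ p, ω (ℓ p) ℓ' = 0) (hrℓ' : ∀ p, ω (r p) ℓ' = 0)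
    (hℓr' : ∀ p, ω (ℓ p) r' = 0) (hrr' : ∀ p, ω (r p) r' = 0) (hℓ'r' : ω ℓ' r' = 1)
    (hm : m ≤ D) (hℓ' : HasLevel W m ℓ') (hr' : HasLevel W (D - m) r') :
    IsGradedSymplecticFamily ω D W (Fin.snoc ℓ ℓ' : Fin (j + 1) → V) (Fin.snoc r r')
      (Fin.snoc d m) where
  toIsSymplecticFamily := h.toIsSymplecticFamily.snoc hω hℓℓ' hrℓ' hℓr' hrr' hℓ'r'
  level_le := Fin.lastCases (by simpa using hm) (by simpa using h.level_le)
  hasLevel_left := Fin.lastCases (by simpa using hℓ') (by simpa using h.hasLevel_left)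
  hasLevel_right := Fin.lastCases (by simpa using hr') (by simpa using h.hasLevel_right)

theorem exists_snoc [FiniteDimensional K V] {j : ℕ} {ℓ r : Fin j → V} {d : Fin j → ℕ}
    (h : IsGradedSymplecticFamily ω D W ℓ r d) (hω : ω.IsAlt) (hnd : ω.Nondegenerate)
    (hW : IsDualFiltration ω D W) (hj : 2 * j < finrank K V) :
    ∃ ℓ' r' m, IsGradedSymplecticFamily ω D W (Fin.snoc ℓ ℓ' : Fin (j + 1) → V) (Fin.snoc r r')
      (Fin.snoc d m) := by
  obtain ⟨ℓ', hℓ'0, hℓ'⟩ := ω.exists_ne_zero_forall_apply_eq_zero (Sum.elim ℓ r)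
    (by simpa [two_mul] using hj)
  have hℓℓ' (p : Fin j) : ω (ℓ p) ℓ' = 0 := hℓ' (.inl p)
  have hrℓ' (p : Fin j) : ω (r p) ℓ' = 0 := hℓ' (.inr p)
  obtain ⟨m, hm, hℓ'm⟩ := hW.exists_hasLevel hℓ'0
  obtain ⟨r₀, hr₀, hℓ'r₀⟩ := hW.exists_mem_apply_eq_one hω hnd hm hℓ'm.2
  set r' := symplecticProj ω ℓ r r₀
  have hℓ'r' : ω ℓ' r' = 1 := by
    rwa [apply_symplecticProj_of_forall_eq_zero (fun p => hω.eq_iff.mp (hℓℓ' p))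
      (fun p => hω.eq_iff.mp (hrℓ' p))]
  have hr'm : HasLevel W (D - m) r' := by
    refine ⟨h.symplecticProj_mem hW hr₀, fun hr' => ?_⟩
    rw [← hW.orthogonal_eq hnd hm] at hr'
    simp [hr' ℓ' hℓ'm.1] at hℓ'r'
  exact ⟨ℓ', r', m, h.snoc hω hℓℓ' hrℓ' (h.left_symplecticProj hω · r₀)
    (h.right_symplecticProj hω · r₀) hℓ'r' hm hℓ'm hr'm⟩

end IsGradedSymplecticFamily

theorem exists_isGradedSymplecticFamily [FiniteDimensional K V] (hω : ω.IsAlt)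
    (hnd : ω.Nondegenerate) (hW : IsDualFiltration ω D W) :
    ∀ j, 2 * j ≤ finrank K V →
      ∃ (ℓ r : Fin j → V) (d : Fin j → ℕ), IsGradedSymplecticFamily ω D W ℓ r d
  | 0, _ => ⟨Fin.elim0, Fin.elim0, Fin.elim0, ⟨⟨finZeroElim, finZeroElim, finZeroElim⟩,
      finZeroElim, finZeroElim, finZeroElim⟩⟩
  | j + 1, hj => by
    obtain ⟨ℓ, r, d, h⟩ := exists_isGradedSymplecticFamily hω hnd hW j (by omega)
    obtain ⟨ℓ', r', m, h'⟩ := h.exists_snoc hω hnd hW (by omega)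
    exact ⟨_, _, _, h'⟩

end Filtration

theorem canonical_basis_of_dimensional_duality_general (D k : ℕ)
    (V : Type) [AddCommGroup V] [Module (ZMod 2) V] [Module.Finite (ZMod 2) V]
    (ω : V →ₗ[ZMod 2] V →ₗ[ZMod 2] ZMod 2)
    (halt : ∀ v, ω v v = 0)
    (hnd : ∀ v, v ≠ 0 → ∃ w, ω v w = 1)
    (hrank : Module.finrank (ZMod 2) V = 2 * k)
    (W : ℕ → Submodule (ZMod 2) V)
    (hmono : Monotone W) (hbot : W 0 = ⊥) (htop : W (D + 1) = ⊤)
    (hdual : ∀ m ≤ D,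
      Module.finrank (ZMod 2) (W (m + 1)) + Module.finrank (ZMod 2) (W (D - m)) =
        Module.finrank (ZMod 2) (W (D - m + 1)) + Module.finrank (ZMod 2) (W m))
    (hcomm : ∀ m m', m + m' < D → ∀ u ∈ W (m + 1), ∀ v ∈ W (m' + 1), ω u v = 0) :
    ∃ (ℓ r : Fin k → V) (d : Fin k → ℕ),
      (∀ p, d p ≤ D) ∧
      (∀ p, ℓ p ∈ W (d p + 1) ∧ ℓ p ∉ W (d p)) ∧
      (∀ p, r p ∈ W (D - d p + 1) ∧ r p ∉ W (D - d p)) ∧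
      LinearIndependent (ZMod 2) (Sum.elim ℓ r) ∧
      Submodule.span (ZMod 2) (Set.range (Sum.elim ℓ r)) = ⊤ ∧
      (∀ p q, ω (ℓ p) (r q) = if p = q then 1 else 0) ∧
      (∀ p q, ω (ℓ p) (ℓ q) = 0) ∧
      (∀ p q, ω (r p) (r q) = 0) := by
  have hω : ω.IsAlt := halt
  have hnondeg : ω.Nondegenerate := by
    refine hω.isRefl.nondegenerate_iff_separatingLeft.mpr fun v hv => ?_
    by_contra hv0
    obtain ⟨w, hw⟩ := hnd v hv0
    simp [hv w] at hw
  obtain ⟨ℓ, r, d, h⟩ := exists_isGradedSymplecticFamily hω hnondeg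
    ⟨hmono, hbot, htop, hdual, hcomm⟩ k hrank.ge
  have hli := h.linearIndependent
  exact ⟨ℓ, r, d, h.level_le, h.hasLevel_left, h.hasLevel_right, hli,
    hli.span_eq_top_of_card_eq_finrank' (by simp [hrank, two_mul]), h.left_right, h.left_left,
    h.right_right⟩

/-- Canonical form of logical operators from dimensional duality.  The space `V` of
logical operators (the centralizer modulo the stabilizer group) of a code with `k`
logical qubits is an `F₂`-space of dimension `2k`, with the nondegenerate alternating
form `ω` recording commutation.  Logical operators are graded by dimension through a
filtration `W 0 = ⊥ ⊆ W 1 ⊆ ⋯ ⊆ W (D+1) = ⊤`, where `W (m+1)` is spanned by the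
logical operators of dimension `≤ m`; `hdual` says `g_m = g_{D-m}` and `hcomm` says
that `m`- and `m'`-dimensional logical operators commute when `m + m' < D`.  Then
there is a canonical basis `{ℓ_1, …, ℓ_k; r_1, …, r_k}` such that each anti-commuting
pair `(ℓ_p, r_p)` consists of an `m_p`-dimensional and a `(D - m_p)`-dimensional
logical operator, `ℓ_p` anti-commutes with `r_p`, and all other pairs commute. -/
theorem canonical_basis_of_dimensional_duality (D k : ℕ)
    (V : Type) [AddCommGroup V] [Module (ZMod 2) V] [Module.Finite (ZMod 2) V]
    (ω : V →ₗ[ZMod 2] V →ₗ[ZMod 2] ZMod 2)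
    (hsymm : ∀ u v, ω u v = ω v u) (halt : ∀ v, ω v v = 0)
    (hnd : ∀ v, v ≠ 0 → ∃ w, ω v w = 1)
    (hrank : Module.finrank (ZMod 2) V = 2 * k)
    (W : ℕ → Submodule (ZMod 2) V)
    (hmono : Monotone W) (hbot : W 0 = ⊥) (htop : W (D + 1) = ⊤)
    (hdual : ∀ m ≤ D,
      Module.finrank (ZMod 2) (W (m + 1)) + Module.finrank (ZMod 2) (W (D - m)) =
        Module.finrank (ZMod 2) (W (D - m + 1)) + Module.finrank (ZMod 2) (W m))
    (hcomm : ∀ m m', m + m' < D → ∀ u ∈ W (m + 1), ∀ v ∈ W (m' + 1), ω u v = 0) :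
    ∃ (ℓ r : Fin k → V) (d : Fin k → ℕ),
      (∀ p, d p ≤ D) ∧
      (∀ p, ℓ p ∈ W (d p + 1) ∧ ℓ p ∉ W (d p)) ∧
      (∀ p, r p ∈ W (D - d p + 1) ∧ r p ∉ W (D - d p)) ∧
      LinearIndependent (ZMod 2) (Sum.elim ℓ r) ∧
      Submodule.span (ZMod 2) (Set.range (Sum.elim ℓ r)) = ⊤ ∧
      (∀ p q, ω (ℓ p) (r q) = if p = q then 1 else 0) ∧
      (∀ p q, ω (ℓ p) (ℓ q) = 0) ∧
      (∀ p q, ω (r p) (r q) = 0) :=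
  canonical_basis_of_dimensional_duality_general D k V ω halt hnd hrank W hmono hbot htop hdual
    hcomm
end

section
/- Define maps f₀, f₁ from Pauli column operators of length 2^{m'} to length 2^{m'−1} by f₀(U)_j = U_j·U_{j+2^{m'−1}} and f₁(U)_j = U_j, and assign to each nonidentity column operator U a characteristic vector b(U) ∈ {0,1}^m by the iterative rule: b_m = 1 and recurse on f₁(U) if f₀(U) = I, else b_m = 0 and recurse on f₀(U). Then the resulting characteristic operator V(U) = f_{b_1}∘···∘f_{b_m}(U) is not the identity whenever U ≠ I. -/
/-- The Pauli group modulo phases on a composite particle of `v` qubits, as an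
`F₂`-vector space (so multiplication of Pauli operators is written additively and
the identity is `0`). -/
abbrev PauliMP (v : ℕ) := (Fin v → ZMod 2) × (Fin v → ZMod 2)

/-- `f₀` halves the length of a column operator: `f₀(U)_j = U_j · U_{j + 2^{m}}`. -/
def colF0 (v m : ℕ) (U : Fin (2 ^ (m + 1)) → PauliMP v) : Fin (2 ^ m) → PauliMP v :=
  fun j =>
    U ⟨j.val, lt_of_lt_of_le j.isLt (Nat.pow_le_pow_right (by norm_num) (Nat.le_succ m))⟩ +
    U ⟨j.val + 2 ^ m, by
        have h := j.isLt
        have h2 : 2 ^ (m + 1) = 2 ^ m + 2 ^ m := by ring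
        omega⟩

/-- `f₁` truncates a column operator to its first half: `f₁(U)_j = U_j`. -/
def colF1 (v m : ℕ) (U : Fin (2 ^ (m + 1)) → PauliMP v) : Fin (2 ^ m) → PauliMP v :=
  fun j =>
    U ⟨j.val, lt_of_lt_of_le j.isLt (Nat.pow_le_pow_right (by norm_num) (Nat.le_succ m))⟩

/-- The characteristic data `(b(U), V(U))` of a column operator `U` on `2^m`
composite particles: iteratively, `b_m = 1` and recurse on `f₁(U)` if `f₀(U) = I`,
else `b_m = 0` and recurse on `f₀(U)`; the characteristic operator `V(U)` is the
single Pauli element remaining after `m` steps.  (The bit `b_i` of the paper is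
`(charData v m U).1 ⟨i-1, _⟩`.) -/
def charData (v : ℕ) : (m : ℕ) → (Fin (2 ^ m) → PauliMP v) → (Fin m → Bool) × PauliMP v
  | 0, U => (Fin.elim0, U ⟨0, by norm_num⟩)
  | m + 1, U =>
    if colF0 v m U = 0 then
      (Fin.snoc (charData v m (colF1 v m U)).1 true, (charData v m (colF1 v m U)).2)
    else
      (Fin.snoc (charData v m (colF0 v m U)).1 false, (charData v m (colF0 v m U)).2)

/-! Each step of the recursion keeps the column operator nonidentity: it moves to `f₀(U)` only
when that is nonidentity, and to `f₁(U)` only when `f₀(U) = I`, i.e. `U_{j + 2^m} = U_j`, so that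
`U` is then determined by its first half `f₁(U)`. -/

theorem eq_zero_of_colF0_eq_zero_of_colF1_eq_zero {v m : ℕ} {U : Fin (2 ^ (m + 1)) → PauliMP v}
    (h0 : colF0 v m U = 0) (h1 : colF1 v m U = 0) : U = 0 := by
  funext ⟨j, hj⟩
  rcases lt_or_ge j (2 ^ m) with hlow | hhigh
  · exact congrFun h1 ⟨j, hlow⟩
  · obtain ⟨i, rfl⟩ := Nat.exists_eq_add_of_le' hhigh
    have hi : i < 2 ^ m := by rw [pow_succ] at hj; omega
    have hsum := congrFun h0 ⟨i, hi⟩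
    have hfirst := congrFun h1 ⟨i, hi⟩
    simp only [colF0, colF1, Pi.zero_apply] at hsum hfirst
    rwa [hfirst, zero_add] at hsum

/-- The characteristic operator `V(U) = f_{b_1} ∘ ⋯ ∘ f_{b_m}(U)` of a nonidentity
column operator is itself not the identity. -/
theorem charOperator_ne_zero (v m : ℕ) (U : Fin (2 ^ m) → PauliMP v) (hU : U ≠ 0) :
    (charData v m U).2 ≠ 0 := by
  induction m with
  | zero =>
    refine fun h => hU (funext fun ⟨j, hj⟩ => ?_)
    obtain rfl : j = 0 := by simpa using hj
    exact h
  | succ m ih =>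
    rw [charData]
    split_ifs with h0
    · exact ih _ fun h1 => hU (eq_zero_of_colF0_eq_zero_of_colF1_eq_zero h0 h1)
    · exact ih _ h0
end

section
/- With the characteristic vector assignment as above, if U and U' are column operators with characteristic vectors b(U) > b(U') (in the order given by comparing Σ b_j 2^{j−1}) and U'' = U·U' ≠ I, then b(U'') = b(U') and the characteristic operator of U'' equals that of U'. -/
/-- The numerical value `g(b) = Σ b_j 2^{j-1}` of a binary vector, giving the order
on characteristic vectors. -/
def gval {m : ℕ} (b : Fin m → Bool) : ℕ :=
  ∑ j, if b j then 2 ^ (j : ℕ) else 0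

/-!
Induct on `m` along the recursion defining `charData`. Since `f₀` and `f₁` are additive,
the top bits decide everything: the top bit weighs more than all lower bits together, so
`b(U) > b(U')` forces either `b_m(U) = 1, b_m(U') = 0`, in which case `f₀(U U') = f₀(U') ≠ I`
and `U U'` follows the path of `U'` verbatim, or equal top bits, in which case both recurse
on the same halving and the inequality passes to the halves. In the latter case with
`b_m = 0` the product `f₀(U) f₀(U')` is not `I`, because in characteristic two it would
force `f₀(U) = f₀(U')`.
-/

lemma gval_snoc {m : ℕ} (b : Fin m → Bool) (t : Bool) :
    gval (Fin.snoc b t) = gval b + (if t then 2 ^ m else 0) := by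
  simp [gval, Fin.sum_univ_castSucc]

lemma gval_lt {m : ℕ} (b : Fin m → Bool) : gval b < 2 ^ m := by
  induction m with
  | zero => simp [gval]
  | succ m ih =>
    rw [← Fin.snoc_init_self b, gval_snoc, pow_succ]
    have := ih (Fin.init b)
    split <;> omega

lemma gval_snoc_lt_gval_snoc_iff {m : ℕ} (b b' : Fin m → Bool) (t : Bool) :
    gval (Fin.snoc b t) < gval (Fin.snoc b' t) ↔ gval b < gval b' := by
  simp only [gval_snoc, add_lt_add_iff_right]

lemma gval_snoc_false_lt_gval_snoc_true {m : ℕ} (b b' : Fin m → Bool) :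
    gval (Fin.snoc b false) < gval (Fin.snoc b' true) := by
  simp only [gval_snoc, if_true, Bool.false_eq_true, if_false, add_zero]
  exact (gval_lt b).trans_le (Nat.le_add_left _ _)

section
variable {v m : ℕ}

lemma colF0_add (U U' : Fin (2 ^ (m + 1)) → PauliMP v) :
    colF0 v m (U + U') = colF0 v m U + colF0 v m U' := by
  funext j
  simp only [colF0, Pi.add_apply]
  abel

lemma colF1_add (U U' : Fin (2 ^ (m + 1)) → PauliMP v) :
    colF1 v m (U + U') = colF1 v m U + colF1 v m U' :=
  rfl

lemma charData_succ_of_colF0_eq_zero {U : Fin (2 ^ (m + 1)) → PauliMP v}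
    (h : colF0 v m U = 0) :
    charData v (m + 1) U =
      (Fin.snoc (charData v m (colF1 v m U)).1 true, (charData v m (colF1 v m U)).2) := by
  rw [charData, if_pos h]

lemma charData_succ_of_colF0_ne_zero {U : Fin (2 ^ (m + 1)) → PauliMP v}
    (h : colF0 v m U ≠ 0) :
    charData v (m + 1) U =
      (Fin.snoc (charData v m (colF0 v m U)).1 false, (charData v m (colF0 v m U)).2) := by
  rw [charData, if_neg h]

theorem charData_add_of_gval_lt (U U' : Fin (2 ^ m) → PauliMP v)
    (hlt : gval (charData v m U').1 < gval (charData v m U).1) :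
    charData v m (U + U') = charData v m U' := by
  induction m with
  | zero => simp [gval] at hlt
  | succ m ih =>
    by_cases h0 : colF0 v m U = 0 <;> by_cases h0' : colF0 v m U' = 0
    · have hsum : colF0 v m (U + U') = 0 := by rw [colF0_add, h0, h0', add_zero]
      rw [charData_succ_of_colF0_eq_zero h0, charData_succ_of_colF0_eq_zero h0',
        gval_snoc_lt_gval_snoc_iff] at hlt
      rw [charData_succ_of_colF0_eq_zero hsum, charData_succ_of_colF0_eq_zero h0', colF1_add,
        ih _ _ hlt]
    · have hsum : colF0 v m (U + U') = colF0 v m U' := by rw [colF0_add, h0, zero_add]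
      rw [charData_succ_of_colF0_ne_zero (hsum ▸ h0'), charData_succ_of_colF0_ne_zero h0',
        hsum]
    · rw [charData_succ_of_colF0_ne_zero h0, charData_succ_of_colF0_eq_zero h0'] at hlt
      exact absurd hlt (gval_snoc_false_lt_gval_snoc_true _ _).not_gt
    · rw [charData_succ_of_colF0_ne_zero h0, charData_succ_of_colF0_ne_zero h0',
        gval_snoc_lt_gval_snoc_iff] at hlt
      have hsum : colF0 v m (U + U') ≠ 0 := by
        rw [colF0_add]
        intro h
        rw [← ZModModule.sub_eq_add, sub_eq_zero] at h
        exact hlt.ne (by rw [h])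
      rw [charData_succ_of_colF0_ne_zero hsum, charData_succ_of_colF0_ne_zero h0', colF0_add,
        ih _ _ hlt]

end

theorem charData_mul_of_gt_general (v m : ℕ) (U U' : Fin (2 ^ m) → PauliMP v)
    (hgt : gval (charData v m U).1 > gval (charData v m U').1) :
    (charData v m (U + U')).1 = (charData v m U').1 ∧
    (charData v m (U + U')).2 = (charData v m U').2 := by
  rw [charData_add_of_gval_lt U U' hgt]
  exact ⟨rfl, rfl⟩

/-- If `U` and `U'` are (nonidentity) column operators with characteristic vectors
`b(U) > b(U')` and `U'' = U · U' ≠ I`, then `b(U'') = b(U')` and the characteristic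
operator of `U''` equals that of `U'`. -/
theorem charData_mul_of_gt (v m : ℕ) (U U' : Fin (2 ^ m) → PauliMP v)
    (hU : U ≠ 0) (hU' : U' ≠ 0)
    (hgt : gval (charData v m U).1 > gval (charData v m U').1)
    (hne : U + U' ≠ 0) :
    (charData v m (U + U')).1 = (charData v m U').1 ∧
    (charData v m (U + U')).2 = (charData v m U').2 :=
  charData_mul_of_gt_general v m U U' hgt
end
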